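/- arXiv:1611.03685 — 6 statements merged into one kernel-verified Lean document; each statement's English description precedes it below -/
import Mathlib

section
/- Let p be a prime, i ≥ 0 an integer and m ≥ 2i an integer. Let H_i := γ^{i} B(ℤ_p) γ^{−i} ⊆ B(ℤ_p) and let H_{i,m} ⊆ B(ℤ/p^mℤ) be the image of H_i under the reduction homomorphism B(ℤ_p) → B(ℤ/p^mℤ). Then the natural map of left coset spaces B(ℤ_p)/H_i → B(ℤ/p^mℤ)/H_{i,m}, induced by reduction modulo p^m, is a bijection. -/
set_option synthInstance.maxHeartbeats 1000000
set_option maxHeartbeats 1000000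
open Matrix

/-- The Borel subgroup of upper triangular matrices in `GL₂(R)`. -/
def BorelGL2 (R : Type*) [CommRing R] : Subgroup (GL (Fin 2) R) where
  carrier := {g | (g : Matrix (Fin 2) (Fin 2) R) 1 0 = 0}
  one_mem' := by
    show ((1 : GL (Fin 2) R) : Matrix (Fin 2) (Fin 2) R) 1 0 = 0
    simp [Matrix.one_apply]
  mul_mem' := by
    intro a b ha hb
    show ((a * b : GL (Fin 2) R) : Matrix (Fin 2) (Fin 2) R) 1 0 = 0
    have ha' : (a : Matrix (Fin 2) (Fin 2) R) 1 0 = 0 := ha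
    have hb' : (b : Matrix (Fin 2) (Fin 2) R) 1 0 = 0 := hb
    simp [Units.val_mul, Matrix.mul_apply, Fin.sum_univ_two, ha', hb']
  inv_mem' := by
    intro a ha
    have ha' : (a : Matrix (Fin 2) (Fin 2) R) 1 0 = 0 := ha
    show ((a⁻¹ : GL (Fin 2) R) : Matrix (Fin 2) (Fin 2) R) 1 0 = 0
    rw [Matrix.coe_units_inv, Matrix.inv_def]
    simp [Matrix.adjugate_fin_two, ha']

/-- The subgroup `H_i = γ^i B(ℤ_p) γ^{-i} = {(a b; 0 d) : a, d ∈ ℤ_p^*, b ∈ p^{2i}ℤ_p}`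
of `B(ℤ_p) ⊆ GL₂(ℤ_p)` (the conditions `a, d ∈ ℤ_p^*` are automatic for an upper
triangular element of `GL₂(ℤ_p)`). -/
def Hsub (p : ℕ) [Fact p.Prime] (i : ℕ) : Subgroup (GL (Fin 2) ℤ_[p]) where
  carrier := {g | (g : Matrix (Fin 2) (Fin 2) ℤ_[p]) 1 0 = 0 ∧
    ∃ c : ℤ_[p], (g : Matrix (Fin 2) (Fin 2) ℤ_[p]) 0 1 = (p : ℤ_[p]) ^ (2 * i) * c}
  one_mem' := by
    refine ⟨?_, 0, ?_⟩
    · show ((1 : GL (Fin 2) ℤ_[p]) : Matrix (Fin 2) (Fin 2) ℤ_[p]) 1 0 = 0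
      simp [Matrix.one_apply]
    · show ((1 : GL (Fin 2) ℤ_[p]) : Matrix (Fin 2) (Fin 2) ℤ_[p]) 0 1 = _
      simp [Matrix.one_apply]
  mul_mem' := by
    rintro a b ⟨ha0, ca, hca⟩ ⟨hb0, cb, hcb⟩
    refine ⟨?_, (a : Matrix (Fin 2) (Fin 2) ℤ_[p]) 0 0 * cb +
      ca * (b : Matrix (Fin 2) (Fin 2) ℤ_[p]) 1 1, ?_⟩
    · show ((a * b : GL (Fin 2) ℤ_[p]) : Matrix (Fin 2) (Fin 2) ℤ_[p]) 1 0 = 0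
      simp [Units.val_mul, Matrix.mul_apply, Fin.sum_univ_two, ha0, hb0]
    · show ((a * b : GL (Fin 2) ℤ_[p]) : Matrix (Fin 2) (Fin 2) ℤ_[p]) 0 1 = _
      simp only [Units.val_mul, Matrix.mul_apply, Fin.sum_univ_two]
      rw [hca, hcb]; ring
  inv_mem' := by
    rintro a ⟨ha0, ca, hca⟩
    refine ⟨?_, Ring.inverse ((a : Matrix (Fin 2) (Fin 2) ℤ_[p]).det) * (-ca), ?_⟩
    · show ((a⁻¹ : GL (Fin 2) ℤ_[p]) : Matrix (Fin 2) (Fin 2) ℤ_[p]) 1 0 = 0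
      rw [Matrix.coe_units_inv, Matrix.inv_def]
      simp [Matrix.adjugate_fin_two, ha0]
    · show ((a⁻¹ : GL (Fin 2) ℤ_[p]) : Matrix (Fin 2) (Fin 2) ℤ_[p]) 0 1 = _
      rw [Matrix.coe_units_inv, Matrix.inv_def]
      simp only [Matrix.adjugate_fin_two, Matrix.smul_apply, Matrix.cons_val', Matrix.cons_val_one,
        Matrix.head_cons, Matrix.cons_val_zero, Matrix.empty_val', Matrix.cons_val_fin_one,
        Matrix.head_fin_const, Matrix.of_apply, smul_eq_mul]
      rw [hca]; ring
  
/-- The reduction homomorphism `GL₂(ℤ_p) → GL₂(ℤ/p^mℤ)`. -/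
noncomputable def redGL (p : ℕ) [Fact p.Prime] (m : ℕ) :
    GL (Fin 2) ℤ_[p] →* GL (Fin 2) (ZMod (p ^ m)) :=
  Units.map (RingHom.mapMatrix (PadicInt.toZModPow (p := p) m)).toMonoidHom

/-- The reduction homomorphism `B(ℤ_p) → B(ℤ/p^mℤ)`. -/
noncomputable def redBorel (p : ℕ) [Fact p.Prime] (m : ℕ) :
    ↥(BorelGL2 (R := ℤ_[p])) →* ↥(BorelGL2 (ZMod (p ^ m))) :=
  MonoidHom.codRestrict ((redGL p m).comp (BorelGL2 ℤ_[p]).subtype) _ (fun b => by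
    have hb : ((b : GL (Fin 2) ℤ_[p]) : Matrix (Fin 2) (Fin 2) ℤ_[p]) 1 0 = 0 := b.2
    show ((redGL p m (b : GL (Fin 2) ℤ_[p])) : Matrix (Fin 2) (Fin 2) (ZMod (p ^ m))) 1 0 = 0
    simp [redGL, Units.coe_map, RingHom.mapMatrix_apply, Matrix.map_apply, hb])


section Aux

variable (p : ℕ) [Fact p.Prime]

lemma redBorel_entry (m : ℕ) (b : ↥(BorelGL2 (R := ℤ_[p]))) (j k : Fin 2) :
    (((redBorel p m b : ↥(BorelGL2 (ZMod (p ^ m)))) : GL (Fin 2) (ZMod (p ^ m))) :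
      Matrix (Fin 2) (Fin 2) (ZMod (p ^ m))) j k =
    PadicInt.toZModPow m (((b : GL (Fin 2) ℤ_[p]) : Matrix (Fin 2) (Fin 2) ℤ_[p]) j k) := rfl

lemma isUnit_of_toZModPow (m : ℕ) (hm : 1 ≤ m) (x : ℤ_[p])
    (h : IsUnit (PadicInt.toZModPow m x)) : IsUnit x := by
  by_contra hx
  rw [PadicInt.not_isUnit_iff, PadicInt.norm_lt_one_iff_dvd] at hx
  obtain ⟨c, rfl⟩ := hx
  rw [_root_.map_mul, map_natCast] at h
  have hp : IsUnit ((p : ℕ) : ZMod (p ^ m)) := isUnit_of_mul_isUnit_left h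
  haveI : NeZero (p ^ m) := ⟨pow_ne_zero m (Fact.out : p.Prime).ne_zero⟩
  rw [ZMod.isUnit_iff_coprime] at hp
  have hd : p ∣ p ^ m := dvd_pow_self p (by omega)
  exact (Fact.out : p.Prime).one_lt.ne' (Nat.Coprime.eq_one_of_dvd hp hd)

lemma redBorel_surjective (m : ℕ) :
    Function.Surjective (redBorel p m) := by
  rcases Nat.eq_zero_or_pos m with rfl | hm
  · haveI : Subsingleton (ZMod (p ^ 0)) := by rw [pow_zero]; infer_instance
    intro b
    exact ⟨1, Subtype.ext (Units.ext (Subsingleton.elim _ _))⟩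
  · intro b
    set M : Matrix (Fin 2) (Fin 2) (ZMod (p ^ m)) := ((b : GL (Fin 2) (ZMod (p ^ m))) :
      Matrix (Fin 2) (Fin 2) (ZMod (p ^ m))) with hM
    have hb10 : M 1 0 = 0 := b.2
    have hdetM : IsUnit M.det :=
      Matrix.isUnit_iff_isUnit_det M |>.mp ⟨(b : GL (Fin 2) (ZMod (p ^ m))), rfl⟩
    rw [Matrix.det_fin_two, hb10, mul_zero, sub_zero] at hdetM
    haveI : NeZero (p ^ m) := ⟨pow_ne_zero m (Fact.out : p.Prime).ne_zero⟩
    set A : Matrix (Fin 2) (Fin 2) ℤ_[p] :=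
      Matrix.of ![![((M 0 0).val : ℤ_[p]), ((M 0 1).val : ℤ_[p])],
        ![0, ((M 1 1).val : ℤ_[p])]] with hA
    have hred : ∀ j k, PadicInt.toZModPow m (A j k) = M j k := by
      intro j k
      fin_cases j <;> fin_cases k <;>
        simp [hA, map_natCast, ZMod.natCast_val, ZMod.cast_id, hb10]
    have hu00 : IsUnit (A 0 0) := by
      refine isUnit_of_toZModPow p m hm _ ?_
      rw [hred 0 0]; exact isUnit_of_mul_isUnit_left hdetM
    have hu11 : IsUnit (A 1 1) := by
      refine isUnit_of_toZModPow p m hm _ ?_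
      rw [hred 1 1]; exact isUnit_of_mul_isUnit_left (mul_comm (M 0 0) (M 1 1) ▸ hdetM)
    have hA10 : A 1 0 = 0 := by simp [hA]
    have hdetA : IsUnit A.det := by
      rw [Matrix.det_fin_two, hA10, mul_zero, sub_zero]
      exact hu00.mul hu11
    have hAu : IsUnit A := (Matrix.isUnit_iff_isUnit_det A).mpr hdetA
    have hBorel : (hAu.unit : GL (Fin 2) ℤ_[p]) ∈ BorelGL2 ℤ_[p] := by
      show ((hAu.unit : GL (Fin 2) ℤ_[p]) : Matrix (Fin 2) (Fin 2) ℤ_[p]) 1 0 = 0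
      rw [hAu.unit_spec]; exact hA10
    refine ⟨⟨hAu.unit, hBorel⟩, Subtype.ext (Units.ext ?_)⟩
    ext j k
    have h1 : (((redBorel p m ⟨hAu.unit, hBorel⟩ : ↥(BorelGL2 (ZMod (p ^ m)))) :
        GL (Fin 2) (ZMod (p ^ m))) : Matrix (Fin 2) (Fin 2) (ZMod (p ^ m))) j k =
        PadicInt.toZModPow m (A j k) := by
      rw [redBorel_entry]
      congr 1
    rw [h1, hred]

lemma mem_of_redBorel_mem (i m : ℕ) (him : 2 * i ≤ m) (g : ↥(BorelGL2 (R := ℤ_[p])))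
    (hg : redBorel p m g ∈ ((Hsub p i).subgroupOf (BorelGL2 ℤ_[p])).map (redBorel p m)) :
    g ∈ (Hsub p i).subgroupOf (BorelGL2 ℤ_[p]) := by
  obtain ⟨h, hh, hhg⟩ := hg
  simp only [SetLike.mem_coe, Subgroup.mem_subgroupOf] at hh
  rw [Subgroup.mem_subgroupOf]
  obtain ⟨hh10, c, hc⟩ := hh
  refine ⟨g.2, ?_⟩
  have hent : PadicInt.toZModPow m (((h : GL (Fin 2) ℤ_[p]) :
      Matrix (Fin 2) (Fin 2) ℤ_[p]) 0 1) =
      PadicInt.toZModPow m (((g : GL (Fin 2) ℤ_[p]) : Matrix (Fin 2) (Fin 2) ℤ_[p]) 0 1) := by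
    have := congrArg (fun x => (((x : ↥(BorelGL2 (ZMod (p ^ m)))) : GL (Fin 2) (ZMod (p ^ m))) :
      Matrix (Fin 2) (Fin 2) (ZMod (p ^ m))) 0 1) hhg
    simpa only [redBorel_entry] using this
  have hker : ((g : GL (Fin 2) ℤ_[p]) : Matrix (Fin 2) (Fin 2) ℤ_[p]) 0 1 -
      ((h : GL (Fin 2) ℤ_[p]) : Matrix (Fin 2) (Fin 2) ℤ_[p]) 0 1 ∈
      RingHom.ker (PadicInt.toZModPow (p := p) m) := by
    rw [RingHom.mem_ker, map_sub, hent, sub_self]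
  rw [PadicInt.ker_toZModPow, Ideal.mem_span_singleton] at hker
  obtain ⟨d, hd⟩ := hker
  refine ⟨c + (p : ℤ_[p]) ^ (m - 2 * i) * d, ?_⟩
  have heq : ((g : GL (Fin 2) ℤ_[p]) : Matrix (Fin 2) (Fin 2) ℤ_[p]) 0 1 =
      ((h : GL (Fin 2) ℤ_[p]) : Matrix (Fin 2) (Fin 2) ℤ_[p]) 0 1 + (p : ℤ_[p]) ^ m * d := by
    rw [← hd]; ring
  have hpm : (p : ℤ_[p]) ^ m = (p : ℤ_[p]) ^ (2 * i) * (p : ℤ_[p]) ^ (m - 2 * i) := by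
    rw [← pow_add]; congr 1; omega
  rw [heq, hc, hpm]; ring

end Aux

/-- The natural map of left coset spaces `B(ℤ_p)/H_i → B(ℤ/p^mℤ)/H_{i,m}` induced by
reduction mod `p^m` is a bijection, where `H_{i,m}` is the image of
`H_i = γ^i B(ℤ_p) γ^{-i}` under `B(ℤ_p) → B(ℤ/p^mℤ)`. -/


theorem coset_map_Hi_bijective (p : ℕ) [Fact p.Prime] (i m : ℕ) (him : 2 * i ≤ m) :
    ∃ F : (↥(BorelGL2 (R := ℤ_[p])) ⧸ (Hsub p i).subgroupOf (BorelGL2 ℤ_[p])) →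
        (↥(BorelGL2 (ZMod (p ^ m))) ⧸
          ((Hsub p i).subgroupOf (BorelGL2 ℤ_[p])).map (redBorel p m)),
      (∀ b : ↥(BorelGL2 (R := ℤ_[p])),
        F (QuotientGroup.mk b) = QuotientGroup.mk (redBorel p m b)) ∧
      Function.Bijective F := by
  refine ⟨Quotient.lift (fun a => (QuotientGroup.mk (redBorel p m a) :
      ↥(BorelGL2 (ZMod (p ^ m))) ⧸ ((Hsub p i).subgroupOf (BorelGL2 ℤ_[p])).map
        (redBorel p m))) ?_, fun b => rfl, ?_, ?_⟩
  · intro a b hab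
    have hab' : QuotientGroup.leftRel ((Hsub p i).subgroupOf (BorelGL2 ℤ_[p])) a b := hab
    rw [QuotientGroup.leftRel_apply] at hab'
    replace hab := hab'
    rw [QuotientGroup.eq]
    refine Subgroup.mem_map.mpr ⟨a⁻¹ * b, hab, ?_⟩
    rw [_root_.map_mul, map_inv]
  · intro x y
    induction x using QuotientGroup.induction_on with | H a =>
    induction y using QuotientGroup.induction_on with | H b =>
    intro hxy
    have hxy' : (QuotientGroup.mk (redBorel p m a) :
        ↥(BorelGL2 (ZMod (p ^ m))) ⧸ ((Hsub p i).subgroupOf (BorelGL2 ℤ_[p])).map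
          (redBorel p m)) = QuotientGroup.mk (redBorel p m b) := hxy
    rw [QuotientGroup.eq] at hxy'
    rw [QuotientGroup.eq]
    refine mem_of_redBorel_mem p i m him _ ?_
    have : redBorel p m (a⁻¹ * b) = (redBorel p m a)⁻¹ * redBorel p m b := by
      rw [_root_.map_mul, map_inv]
    rw [this]
    exact hxy'
  · intro y
    induction y using QuotientGroup.induction_on with | H b =>
    obtain ⟨a, rfl⟩ := redBorel_surjective p m b
    exact ⟨QuotientGroup.mk a, rfl⟩
end

section
/- Let p be a prime, B' := {b ∈ B(ℚ_p) : det(b) ∈ ℤ_p^*} and G' := {g ∈ GL₂(ℚ_p) : det(g) ∈ ℤ_p^*}. The map of left coset spaces B'/B(ℤ_p) → G'/GL₂(ℤ_p) induced by the inclusion B' ⊆ G' (sending b·B(ℤ_p) to b·GL₂(ℤ_p)) is well defined and bijective. -/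
set_option synthInstance.maxHeartbeats 1000000
set_option maxHeartbeats 1000000

open Matrix

/-- The subgroup `ℤ_p^* ⊆ ℚ_p^*`, i.e. the range of the map `ℤ_[p]ˣ → ℚ_[p]ˣ`. -/
noncomputable def ZpUnits (p : ℕ) [Fact p.Prime] : Subgroup ℚ_[p]ˣ :=
  (Units.map (PadicInt.Coe.ringHom (p := p)).toMonoidHom).range

/-- `G' = {g ∈ GL₂(ℚ_p) : det g ∈ ℤ_p^*}`. -/
noncomputable def Gprime (p : ℕ) [Fact p.Prime] : Subgroup (GL (Fin 2) ℚ_[p]) :=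
  (ZpUnits p).comap Matrix.GeneralLinearGroup.det

/-- `B' = {b ∈ B(ℚ_p) : det b ∈ ℤ_p^*}`. -/
noncomputable def BprimeGL (p : ℕ) [Fact p.Prime] : Subgroup (GL (Fin 2) ℚ_[p]) :=
  BorelGL2 ℚ_[p] ⊓ Gprime p

/-- `GL₂(ℤ_p)` as a subgroup of `GL₂(ℚ_p)` (the range of `GL₂(ℤ_p) → GL₂(ℚ_p)`). -/
noncomputable def GLZp (p : ℕ) [Fact p.Prime] : Subgroup (GL (Fin 2) ℚ_[p]) :=
  (Units.map (RingHom.mapMatrix (PadicInt.Coe.ringHom (p := p))).toMonoidHom).range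


noncomputable def toGL {p : ℕ} [Fact p.Prime] (M : Matrix (Fin 2) (Fin 2) ℤ_[p])
    (h : IsUnit M.det) : GL (Fin 2) ℚ_[p] :=
  Units.map (RingHom.mapMatrix (PadicInt.Coe.ringHom (p := p))).toMonoidHom
    ((Matrix.isUnit_iff_isUnit_det M).mpr h).unit

section Aux
variable {p : ℕ} [Fact p.Prime]
lemma toGL_coe (M : Matrix (Fin 2) (Fin 2) ℤ_[p]) (h : IsUnit M.det) :
    (toGL M h : Matrix (Fin 2) (Fin 2) ℚ_[p]) = M.map (PadicInt.Coe.ringHom (p := p)) := by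
  simp [toGL]

lemma exists_k (g : GL (Fin 2) ℚ_[p]) :
    ∃ k : GL (Fin 2) ℚ_[p], k ∈ GLZp p ∧
      ((g * k : GL (Fin 2) ℚ_[p]) : Matrix (Fin 2) (Fin 2) ℚ_[p]) 1 0 = 0 := by
  set c : ℚ_[p] := (g : Matrix (Fin 2) (Fin 2) ℚ_[p]) 1 0 with hc
  set d : ℚ_[p] := (g : Matrix (Fin 2) (Fin 2) ℚ_[p]) 1 1 with hd
  have hdet : IsUnit (g : Matrix (Fin 2) (Fin 2) ℚ_[p]).det := ⟨Matrix.GeneralLinearGroup.det g, rfl⟩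
  have hcd : ¬ (c = 0 ∧ d = 0) := by
    rintro ⟨h1, h2⟩
    have := hdet.ne_zero
    rw [Matrix.det_fin_two, ← hc, ← hd, h1, h2] at this
    simp at this
  by_cases hle : ‖c‖ ≤ ‖d‖
  · have hd0 : d ≠ 0 := by
      intro h0
      apply hcd
      refine ⟨?_, h0⟩
      rw [h0] at hle; simpa using (norm_le_zero_iff.mp (by simpa using hle))
    have hr : ‖c / d‖ ≤ 1 := by
      rw [norm_div, div_le_one (norm_pos_iff.mpr hd0)]
      exact hle
    set r : ℤ_[p] := ⟨c / d, hr⟩ with hrdef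
    have hdet1 : (!![1, 0; -r, 1] : Matrix (Fin 2) (Fin 2) ℤ_[p]).det = 1 := by
      simp [Matrix.det_fin_two_of]
    refine ⟨toGL _ (hdet1 ▸ isUnit_one), ⟨_, rfl⟩, ?_⟩
    rw [Units.val_mul, Matrix.mul_apply, Fin.sum_univ_two, toGL_coe]
    have e00 : (!![1, 0; -r, 1] : Matrix (Fin 2) (Fin 2) ℤ_[p]) 0 0 = 1 := rfl
    have e10 : (!![1, 0; -r, 1] : Matrix (Fin 2) (Fin 2) ℤ_[p]) 1 0 = -r := rfl
    rw [Matrix.map_apply, Matrix.map_apply, e00, e10, _root_.map_one, map_neg]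
    have : (PadicInt.Coe.ringHom (p:=p)) r = c / d := rfl
    rw [this, ← hc, ← hd]
    field_simp
    ring
  · push_neg at hle
    have hc0 : c ≠ 0 := by
      intro h0; rw [h0] at hle; simp at hle
      exact absurd hle (not_lt.mpr (norm_nonneg d))
    have hr : ‖d / c‖ ≤ 1 := by
      rw [norm_div, div_le_one (norm_pos_iff.mpr hc0)]
      exact le_of_lt hle
    set r : ℤ_[p] := ⟨d / c, hr⟩ with hrdef
    have hdet1 : (!![-r, -1; 1, 0] : Matrix (Fin 2) (Fin 2) ℤ_[p]).det = 1 := by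
      simp [Matrix.det_fin_two_of]
    refine ⟨toGL _ (hdet1 ▸ isUnit_one), ⟨_, rfl⟩, ?_⟩
    rw [Units.val_mul, Matrix.mul_apply, Fin.sum_univ_two, toGL_coe]
    have e00 : (!![-r, -1; 1, 0] : Matrix (Fin 2) (Fin 2) ℤ_[p]) 0 0 = -r := rfl
    have e10 : (!![-r, -1; 1, 0] : Matrix (Fin 2) (Fin 2) ℤ_[p]) 1 0 = 1 := rfl
    rw [Matrix.map_apply, Matrix.map_apply, e00, e10, _root_.map_one, map_neg]
    have : (PadicInt.Coe.ringHom (p:=p)) r = d / c := rfl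
    rw [this, ← hc, ← hd]
    field_simp
    ring


lemma GLZp_le_Gprime : GLZp p ≤ Gprime p := by
  rintro g ⟨u, rfl⟩
  refine ⟨Units.map Matrix.detMonoidHom u, ?_⟩
  ext
  simp [Gprime, RingHom.map_det]

end Aux


/-- The map of left coset spaces 
`B'/B(ℤ_p) → G'/GL₂(ℤ_p)` induced by the inclusion
`B' ⊆ G'` (using `B(ℤ_p) = B' ∩ GL₂(ℤ_p)`) is well defined and bijective. -/
theorem coset_map_Bprime_Gprime_bijective (p : ℕ) [Fact p.Prime] :
    ∃ F : (↥(BprimeGL p) ⧸ (GLZp p).subgroupOf (BprimeGL p)) →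
        (↥(Gprime p) ⧸ (GLZp p).subgroupOf (Gprime p)),
      (∀ b : ↥(BprimeGL p),
        F (QuotientGroup.mk b) =
          QuotientGroup.mk (Subgroup.inclusion (inf_le_right : BprimeGL p ≤ Gprime p) b)) ∧
      Function.Bijective F := by
  have hBG : BprimeGL p ≤ Gprime p := inf_le_right
  have hwd : ∀ a b : ↥(BprimeGL p),
      (QuotientGroup.leftRel ((GLZp p).subgroupOf (BprimeGL p))) a b →
      (QuotientGroup.leftRel ((GLZp p).subgroupOf (Gprime p)))
        (Subgroup.inclusion hBG a) (Subgroup.inclusion hBG b) := by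
    intro a b hab
    rw [QuotientGroup.leftRel_apply] at hab ⊢
    rw [Subgroup.mem_subgroupOf] at hab ⊢
    simpa using hab
  refine ⟨Quotient.map' (Subgroup.inclusion hBG) hwd, fun b => rfl, ?_, ?_⟩
  · intro x y
    refine QuotientGroup.induction_on x fun a => QuotientGroup.induction_on y fun b h => ?_
    have h' : QuotientGroup.mk (Subgroup.inclusion hBG a) =
        QuotientGroup.mk (Subgroup.inclusion hBG b) := h
    rw [QuotientGroup.eq] at h'
    rw [QuotientGroup.eq]
    rw [Subgroup.mem_subgroupOf] at h' ⊢
    simpa using h'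
  · intro y
    refine QuotientGroup.induction_on y fun g => ?_
    obtain ⟨k, hk, hk0⟩ := exists_k (g : GL (Fin 2) ℚ_[p])
    have hb : (g : GL (Fin 2) ℚ_[p]) * k ∈ BprimeGL p :=
      ⟨hk0, mul_mem g.2 (GLZp_le_Gprime hk)⟩
    refine ⟨QuotientGroup.mk ⟨_, hb⟩, ?_⟩
    have h1 : (Quotient.map' (Subgroup.inclusion hBG) hwd (QuotientGroup.mk ⟨_, hb⟩) :
        ↥(Gprime p) ⧸ (GLZp p).subgroupOf (Gprime p)) =
        QuotientGroup.mk (Subgroup.inclusion hBG ⟨_, hb⟩) := rfl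
    rw [h1, QuotientGroup.eq, Subgroup.mem_subgroupOf]
    show ((g : GL (Fin 2) ℚ_[p]) * k)⁻¹ * g ∈ GLZp p
    have h2 : ((g : GL (Fin 2) ℚ_[p]) * k)⁻¹ * g = k⁻¹ := by group
    rw [h2]
    exact inv_mem hk
end

section
/- Let p be a prime. Every g ∈ GL₂(ℚ_p) can be written as g = b·k with b ∈ B(ℚ_p) an upper triangular matrix and k ∈ GL₂(ℤ_p); that is, the Iwasawa decomposition GL₂(ℚ_p) = B(ℚ_p)·GL₂(ℤ_p) holds. -/
set_option synthInstance.maxHeartbeats 1000000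
set_option maxHeartbeats 1000000

open Matrix

/-!
Right multiplication by `GL₂(ℤ_p)` performs column operations over `ℤ_p`. Since `ℤ_p` is a
valuation ring, one of the two entries of the bottom row of `g` is a `ℤ_p`-multiple of the other.
After swapping the columns if necessary, subtracting that multiple of the second column from the
first clears the bottom-left entry, so `g * k` is upper triangular for some `k ∈ GL₂(ℤ_p)`.
-/

theorem map_toGL_transvection {n R S : Type*} [DecidableEq n] [Fintype n] [CommRing R]
    [CommRing S] (f : R →+* S) {i j : n} (hij : i ≠ j) (t : R) :
    (GeneralLinearGroup.map f (SpecialLinearGroup.toGL (SpecialLinearGroup.transvection hij t)) :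
      Matrix n n S) = Matrix.transvection i j (f t) := by
  ext a b
  simp [SpecialLinearGroup.transvection_coe, Matrix.transvection, single_apply, one_apply,
    apply_ite f]

section Borel

variable {R S : Type*} [CommRing R] [CommRing S] (f : R →+* S)

theorem mem_borelGL2_iff {g : GL (Fin 2) S} :
    g ∈ BorelGL2 S ↔ (g : Matrix (Fin 2) (Fin 2) S) 1 0 = 0 :=
  Iff.rfl

theorem mul_map_transvection_mem_borelGL2 {g : GL (Fin 2) S} {t : R}
    (h : (g : Matrix (Fin 2) (Fin 2) S) 1 0 = g 1 1 * f t) :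
    g * GeneralLinearGroup.map f
      (SpecialLinearGroup.toGL (SpecialLinearGroup.transvection one_ne_zero (-t))) ∈
      BorelGL2 S := by
  rw [mem_borelGL2_iff, Units.val_mul, map_toGL_transvection, mul_transvection_apply_same, h,
    map_neg]
  ring

theorem mul_map_swap_mul_transvection_mem_borelGL2 {g : GL (Fin 2) S} {s : R}
    (h : (g : Matrix (Fin 2) (Fin 2) S) 1 1 = g 1 0 * f s) :
    g * GeneralLinearGroup.map f (GeneralLinearGroup.swap R 0 1 *
      SpecialLinearGroup.toGL (SpecialLinearGroup.transvection one_ne_zero (-s))) ∈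
      BorelGL2 S := by
  rw [map_mul, GeneralLinearGroup.map_swap, ← mul_assoc]
  apply mul_map_transvection_mem_borelGL2
  simpa using h

end Borel

section ValuationRing

variable (R : Type*) {K : Type*} [CommRing R] [IsDomain R] [ValuationRing R] [Field K]
  [Algebra R K] [IsFractionRing R K]

theorem ValuationRing.exists_eq_mul_algebraMap_or (c d : K) :
    (∃ t : R, c = d * algebraMap R K t) ∨ ∃ s : R, d = c * algebraMap R K s := by
  by_cases hc : c = 0
  · exact .inl ⟨0, by simp [hc]⟩
  by_cases hd : d = 0
  · exact .inr ⟨0, by simp [hd]⟩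
  obtain ⟨t, ht⟩ | ⟨s, hs⟩ := ValuationRing.isInteger_or_isInteger R (c / d)
  · exact .inl ⟨t, by rw [ht]; field_simp⟩
  · exact .inr ⟨s, by rw [hs]; field_simp⟩

theorem exists_mul_map_mem_borelGL2 (g : GL (Fin 2) K) :
    ∃ k : GL (Fin 2) R, g * GeneralLinearGroup.map (algebraMap R K) k ∈ BorelGL2 K := by
  obtain ⟨t, ht⟩ | ⟨s, hs⟩ := ValuationRing.exists_eq_mul_algebraMap_or R (g 1 0) (g 1 1)
  · exact ⟨_, mul_map_transvection_mem_borelGL2 _ ht⟩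
  · exact ⟨_, mul_map_swap_mul_transvection_mem_borelGL2 _ hs⟩

theorem exists_borelGL2_mul_range_map (g : GL (Fin 2) K) :
    ∃ b ∈ BorelGL2 K, ∃ k ∈ (GeneralLinearGroup.map (algebraMap R K)).range, g = b * k := by
  obtain ⟨k, hk⟩ := exists_mul_map_mem_borelGL2 R g
  exact ⟨_, hk, _, ⟨k⁻¹, rfl⟩, by rw [map_inv, mul_inv_cancel_right]⟩

end ValuationRing

/-- Iwasawa decomposition: `GL₂(ℚ_p) = B(ℚ_p)·GL₂(ℤ_p)`, i.e. every `g ∈ GL₂(ℚ_p)` can be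
written `g = b·k` with `b` upper triangular and `k ∈ GL₂(ℤ_p)`. -/
theorem iwasawa_decomposition (p : ℕ) [Fact p.Prime] (g : GL (Fin 2) ℚ_[p]) :
    ∃ b ∈ BorelGL2 ℚ_[p], ∃ k ∈ GLZp p, g = b * k :=
  -- `GLZp p` is definitionally the range of `GeneralLinearGroup.map (algebraMap ℤ_[p] ℚ_[p])`.
  exists_borelGL2_mul_range_map ℤ_[p] g
end

section
/- Let p be a prime. The coset space B(ℚ_p)\GL₂(ℚ_p), equipped with the quotient topology coming from the topological group GL₂(ℚ_p), is compact. -/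
set_option synthInstance.maxHeartbeats 1000000
set_option maxHeartbeats 1000000

open Matrix

section Aux

variable (p : ℕ) [Fact p.Prime]

/-- The "integral" compact subset `GL₂(ℤ_p)` of `GL₂(ℚ_p)`. -/
def KsetGL2 : Set (GL (Fin 2) ℚ_[p]) :=
  {g | (∀ i j, ‖(g : Matrix (Fin 2) (Fin 2) ℚ_[p]) i j‖ ≤ 1) ∧
       (∀ i j, ‖((g⁻¹ : GL (Fin 2) ℚ_[p]) : Matrix (Fin 2) (Fin 2) ℚ_[p]) i j‖ ≤ 1)}

lemma KsetGL2_isCompact : IsCompact (KsetGL2 p) := by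
  rw [Units.isEmbedding_embedProduct.isCompact_iff]
  -- the set of matrices with entries in the unit ball
  set T : Set (Matrix (Fin 2) (Fin 2) ℚ_[p]) := {A | ∀ i j, ‖A i j‖ ≤ 1} with hT
  have hTc : IsCompact T := by
    have : T = Set.pi Set.univ (fun _ : Fin 2 =>
        Set.pi Set.univ (fun _ : Fin 2 => Metric.closedBall (0 : ℚ_[p]) 1)) := by
      ext A
      constructor
      · intro h i _ j _
        exact mem_closedBall_zero_iff.mpr (h i j)
      · intro h i j
        exact mem_closedBall_zero_iff.mp (h i (Set.mem_univ i) j (Set.mem_univ j))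
    rw [this]
    exact isCompact_univ_pi fun i =>
      isCompact_univ_pi fun j => isCompact_closedBall 0 1
  set C : Set (Matrix (Fin 2) (Fin 2) ℚ_[p] × (Matrix (Fin 2) (Fin 2) ℚ_[p])ᵐᵒᵖ) :=
    T ×ˢ (MulOpposite.op '' T) with hC
  have hCc : IsCompact C := hTc.prod (hTc.image MulOpposite.continuous_op)
  set V : Set (Matrix (Fin 2) (Fin 2) ℚ_[p] × (Matrix (Fin 2) (Fin 2) ℚ_[p])ᵐᵒᵖ) :=
    {x | x.1 * x.2.unop = 1 ∧ x.2.unop * x.1 = 1} with hV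
  have hVcl : IsClosed V := by
    have h1 : Continuous fun x : Matrix (Fin 2) (Fin 2) ℚ_[p] ×
        (Matrix (Fin 2) (Fin 2) ℚ_[p])ᵐᵒᵖ => x.1 * x.2.unop :=
      continuous_fst.mul (MulOpposite.continuous_unop.comp continuous_snd)
    have h2 : Continuous fun x : Matrix (Fin 2) (Fin 2) ℚ_[p] ×
        (Matrix (Fin 2) (Fin 2) ℚ_[p])ᵐᵒᵖ => x.2.unop * x.1 :=
      (MulOpposite.continuous_unop.comp continuous_snd).mul continuous_fst
    exact (isClosed_singleton.preimage h1).inter (isClosed_singleton.preimage h2)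
  have himg : Units.embedProduct _ '' KsetGL2 p = C ∩ V := by
    ext x
    constructor
    · rintro ⟨g, ⟨hg1, hg2⟩, rfl⟩
      refine ⟨⟨hg1, ⟨_, hg2, rfl⟩⟩, ?_, ?_⟩
      · show (g : Matrix (Fin 2) (Fin 2) ℚ_[p]) *
            MulOpposite.unop (MulOpposite.op ((g⁻¹ : _ˣ) : Matrix (Fin 2) (Fin 2) ℚ_[p])) = 1
        rw [MulOpposite.unop_op]
        exact g.mul_inv
      · show MulOpposite.unop (MulOpposite.op ((g⁻¹ : _ˣ) : Matrix (Fin 2) (Fin 2) ℚ_[p])) *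
            (g : Matrix (Fin 2) (Fin 2) ℚ_[p]) = 1
        rw [MulOpposite.unop_op]
        exact g.inv_mul
    · rintro ⟨⟨h1, B, hB, hBx⟩, hmul1, hmul2⟩
      have hunop : x.2.unop = B := by rw [← hBx]; simp
      refine ⟨⟨x.1, x.2.unop, hmul1, hmul2⟩, ⟨h1, ?_⟩, ?_⟩
      · intro i j
        show ‖x.2.unop i j‖ ≤ 1
        rw [hunop]; exact hB i j
      · show (x.1, MulOpposite.op x.2.unop) = x
        rw [MulOpposite.op_unop]
  rw [himg]
  exact hCc.inter_right hVcl

/-- Iwasawa decomposition (the part we need): every right coset of the Borel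
meets `GL₂(ℤ_p)`. -/
lemma exists_Kset_rep (g : GL (Fin 2) ℚ_[p]) :
    ∃ k ∈ KsetGL2 p, g * k⁻¹ ∈ BorelGL2 ℚ_[p] := by
  set A : Matrix (Fin 2) (Fin 2) ℚ_[p] := (g : Matrix (Fin 2) (Fin 2) ℚ_[p]) with hA
  have hdet : A.det ≠ 0 := by
    have := (Matrix.isUnit_iff_isUnit_det A).mp g.isUnit
    exact this.ne_zero
  set c : ℚ_[p] := A 1 0 with hc
  set d : ℚ_[p] := A 1 1 with hd
  have hcd : ¬ (c = 0 ∧ d = 0) := by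
    rintro ⟨h1, h2⟩
    apply hdet
    rw [Matrix.det_fin_two, ← hc, ← hd, h1, h2]
    ring
  rcases le_or_gt ‖c‖ ‖d‖ with hle | hlt
  · -- ‖c‖ ≤ ‖d‖, d ≠ 0
    have hd0 : d ≠ 0 := by
      intro h
      apply hcd
      refine ⟨?_, h⟩
      rw [h, norm_zero] at hle
      exact norm_le_zero_iff.mp hle
    set t : ℚ_[p] := c / d with ht
    have htn : ‖t‖ ≤ 1 := by
      rw [ht, norm_div]
      exact div_le_one_of_le₀ hle (norm_nonneg _)
    set km : Matrix (Fin 2) (Fin 2) ℚ_[p] := !![1, 0; t, 1] with hkm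
    set km' : Matrix (Fin 2) (Fin 2) ℚ_[p] := !![1, 0; -t, 1] with hkm'
    have hmul1 : km * km' = 1 := by
      rw [hkm, hkm']
      ext i j
      fin_cases i <;> fin_cases j <;>
        simp [Matrix.mul_apply, Fin.sum_univ_two, Matrix.one_apply]
    have hmul2 : km' * km = 1 := by
      rw [hkm, hkm']
      ext i j
      fin_cases i <;> fin_cases j <;>
        simp [Matrix.mul_apply, Fin.sum_univ_two, Matrix.one_apply]
    set k : GL (Fin 2) ℚ_[p] := ⟨km, km', hmul1, hmul2⟩ with hk
    refine ⟨k, ⟨?_, ?_⟩, ?_⟩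
    · intro i j
      show ‖km i j‖ ≤ 1
      fin_cases i <;> fin_cases j <;> simp [hkm, htn]
    · intro i j
      show ‖km' i j‖ ≤ 1
      fin_cases i <;> fin_cases j <;> simp [hkm', htn]
    · show ((g * k⁻¹ : GL (Fin 2) ℚ_[p]) : Matrix (Fin 2) (Fin 2) ℚ_[p]) 1 0 = 0
      have : ((k⁻¹ : GL (Fin 2) ℚ_[p]) : Matrix (Fin 2) (Fin 2) ℚ_[p]) = km' := rfl
      rw [Units.val_mul, this]
      rw [Matrix.mul_apply, Fin.sum_univ_two]
      show A 1 0 * km' 0 0 + A 1 1 * km' 1 0 = 0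
      have h00 : km' 0 0 = 1 := rfl
      have h10 : km' 1 0 = -t := rfl
      rw [h00, h10, ← hc, ← hd, ht]
      field_simp
      ring
  · -- ‖d‖ < ‖c‖, c ≠ 0
    have hc0 : c ≠ 0 := by
      intro h
      rw [h, norm_zero] at hlt
      exact absurd (norm_nonneg d) (not_le.mpr hlt)
    set t : ℚ_[p] := d / c with ht
    have htn : ‖t‖ ≤ 1 := by
      rw [ht, norm_div]
      exact div_le_one_of_le₀ hlt.le (norm_nonneg _)
    set km : Matrix (Fin 2) (Fin 2) ℚ_[p] := !![0, 1; 1, t] with hkm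
    set km' : Matrix (Fin 2) (Fin 2) ℚ_[p] := !![-t, 1; 1, 0] with hkm'
    have hmul1 : km * km' = 1 := by
      rw [hkm, hkm']
      ext i j
      fin_cases i <;> fin_cases j <;>
        simp [Matrix.mul_apply, Fin.sum_univ_two, Matrix.one_apply]
    have hmul2 : km' * km = 1 := by
      rw [hkm, hkm']
      ext i j
      fin_cases i <;> fin_cases j <;>
        simp [Matrix.mul_apply, Fin.sum_univ_two, Matrix.one_apply]
    set k : GL (Fin 2) ℚ_[p] := ⟨km, km', hmul1, hmul2⟩ with hk
    refine ⟨k, ⟨?_, ?_⟩, ?_⟩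
    · intro i j
      show ‖km i j‖ ≤ 1
      fin_cases i <;> fin_cases j <;> simp [hkm, htn]
    · intro i j
      show ‖km' i j‖ ≤ 1
      fin_cases i <;> fin_cases j <;> simp [hkm', htn]
    · show ((g * k⁻¹ : GL (Fin 2) ℚ_[p]) : Matrix (Fin 2) (Fin 2) ℚ_[p]) 1 0 = 0
      have : ((k⁻¹ : GL (Fin 2) ℚ_[p]) : Matrix (Fin 2) (Fin 2) ℚ_[p]) = km' := rfl
      rw [Units.val_mul, this]
      rw [Matrix.mul_apply, Fin.sum_univ_two]
      show A 1 0 * km' 0 0 + A 1 1 * km' 1 0 = 0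
      have h00 : km' 0 0 = -t := rfl
      have h10 : km' 1 0 = 1 := rfl
      rw [h00, h10, ← hc, ← hd, ht]
      field_simp
      ring

end Aux

/-- The coset space `B(ℚ_p)\GL₂(ℚ_p)`, with the quotient topology coming from the
topological group `GL₂(ℚ_p)`, is compact. -/
theorem compact_Borel_coset_space (p : ℕ) [Fact p.Prime] :
    CompactSpace (Quotient (QuotientGroup.rightRel (BorelGL2 ℚ_[p]))) := by
  constructor
  have hsurj : Quotient.mk (QuotientGroup.rightRel (BorelGL2 ℚ_[p])) '' KsetGL2 p =
      Set.univ := by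
    ext x
    simp only [Set.mem_univ, iff_true]
    obtain ⟨g, rfl⟩ := Quotient.exists_rep x
    obtain ⟨k, hk, hgk⟩ := exists_Kset_rep p g
    exact ⟨k, hk, Quotient.sound ((QuotientGroup.rightRel_apply).mpr hgk)⟩
  rw [← hsurj]
  exact (KsetGL2_isCompact p).image continuous_quotient_mk'
end

section
/- Let G be a topological group and B ⊆ G a subgroup such that the coset space B\G (with the quotient topology) is compact. Let F be a finite field with the discrete topology, χ : B → F^* a group homomorphism, and let X be a topological space with a continuous left G-action. Define Ind_B^G(χ) := {f : G → F : f continuous and f(bg) = χ(b)f(g) for all b ∈ B, g ∈ G}, with G acting on Ind_B^G(χ) by (h·f)(g) := f(gh), and endow Ind_B^G(χ) with the discrete topology. Then the map Φ ↦ (x ↦ Φ(x)(1)) is a bijection from the set of continuous G-equivariant maps X → Ind_B^G(χ) onto the set of continuous maps ψ : X → F satisfying ψ(b·x) = χ(b)·ψ(x) for all b ∈ B and x ∈ X; its inverse sends ψ to the map x ↦ (g ↦ ψ(g·x)). -/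
variable {G : Type*} [Group G] [TopologicalSpace G]
  {F : Type*} [Field F]
  {X : Type*} [TopologicalSpace X]

/-- The smooth induction `Ind_B^G(χ)`: continuous (= locally constant, since `F` is
discrete) functions `f : G → F` with `f(bg) = χ(b)f(g)` for all `b ∈ B`, `g ∈ G`. -/
def IndSet (B : Subgroup G) (χ : B →* Fˣ) : Set (G → F) :=
  {f | IsLocallyConstant f ∧ ∀ (b : B) (g : G), f ((b : G) * g) = (χ b : F) * f g}

/-- The set of continuous `G`-equivariant maps `X → Ind_B^G(χ)`, where `Ind_B^G(χ)`
carries the discrete topology (so continuity = local constancy) and `G` acts on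
`Ind_B^G(χ)` by right translation, `(h·f)(g) = f(gh)`. -/
def EquivariantMaps [MulAction G X] (B : Subgroup G) (χ : B →* Fˣ) :
    Set (X → G → F) :=
  {Φ | (∀ x, Φ x ∈ IndSet B χ) ∧ IsLocallyConstant Φ ∧
    ∀ (h : G) (x : X), Φ (h • x) = fun g => Φ x (g * h)}

/-- The set of continuous maps `ψ : X → F` with `ψ(b·x) = χ(b)ψ(x)`. -/
def ChiEquivariantMaps [MulAction G X] (B : Subgroup G) (χ : B →* Fˣ) :
    Set (X → F) :=
  {ψ | IsLocallyConstant ψ ∧ ∀ (b : B) (x : X), ψ ((b : G) • x) = (χ b : F) * ψ x}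

/-! The only non-formal point is that `x ↦ (g ↦ ψ(g • x))` is locally constant. Since
`ψ(g • y)` is jointly locally constant in `(g, y)`, each `g₀` has neighbourhoods on which
`ψ(g • y) = ψ(g • x)`; the relation `ψ(bg • y) = χ(b)ψ(g • y)` spreads this equality over the
whole coset `B g`, and compactness of `B\G` lets finitely many such neighbourhoods of `x`
serve for all `g` at once. -/

open Topology

theorem IsLocallyConstant.of_uncurry_of_compactSpace_rightRel [ContinuousMul G] {Y M : Type*}
    [TopologicalSpace Y] [Mul M] (B : Subgroup G)
    [CompactSpace (Quotient (QuotientGroup.rightRel B))] (c : B → M) {f : Y → G → M}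
    (hf : IsLocallyConstant (Function.uncurry f))
    (hc : ∀ y (b : B) g, f y ((b : G) * g) = c b * f y g) :
    IsLocallyConstant f := by
  refine (IsLocallyConstant.iff_eventually_eq f).2 fun x => ?_
  let mk := Quotient.mk (QuotientGroup.rightRel B)
  let P : Y → Quotient (QuotientGroup.rightRel B) → Prop :=
    fun y q => ∀ g, mk g = q → f y g = f x g
  have hP_coset : ∀ y g, f y g = f x g → P y (mk g) := by
    intro y g hg g' hg'
    obtain ⟨b, rfl⟩ : ∃ b : B, (b : G) * g = g' :=
      ⟨⟨g' * g⁻¹, QuotientGroup.rightRel_apply.1 (Quotient.exact hg'.symm)⟩, by simp⟩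
    rw [hc, hc, hg]
  have hP_near : ∀ q, ∀ᶠ z in 𝓝 (x, q), P z.1 z.2 := by
    rintro ⟨g₀⟩
    have hopen : IsOpenMap (Prod.map (id : Y → Y) mk) :=
      IsOpenMap.id.prodMap isOpenMap_quotient_mk'_mul
    refine Filter.Eventually.filter_mono (hopen.nhds_le (x, g₀)) (Filter.eventually_map.2 ?_)
    have hfx : ∀ᶠ p : Y × G in 𝓝 (x, g₀), f x p.2 = f x g₀ :=
      (continuous_const.prodMk continuous_snd).tendsto (x, g₀) |>.eventually (hf.eventually_eq _)
    filter_upwards [hf.eventually_eq (x, g₀), hfx] with p hp hpx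
    exact hP_coset p.1 p.2 (hp.trans hpx.symm)
  filter_upwards [isCompact_univ.eventually_forall_of_forall_eventually
    fun q _ => hP_near q] with y hy
  exact funext fun g => hy (mk g) trivial g rfl

section Induction

variable [MulAction G X] {B : Subgroup G} {χ : B →* Fˣ}

theorem mapsTo_evalOne :
    Set.MapsTo (fun (Φ : X → G → F) (x : X) => Φ x 1)
      (EquivariantMaps B χ) (ChiEquivariantMaps B χ) := by
  rintro Φ ⟨hInd, hΦ, hequiv⟩
  refine ⟨hΦ.comp (fun f => f 1), fun b x => ?_⟩
  simpa [hequiv] using (hInd x).2 b 1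

theorem mapsTo_translates [ContinuousMul G] [ContinuousSMul G X]
    [CompactSpace (Quotient (QuotientGroup.rightRel B))] :
    Set.MapsTo (fun (ψ : X → F) (x : X) (g : G) => ψ (g • x))
      (ChiEquivariantMaps B χ) (EquivariantMaps B χ) := by
  rintro ψ ⟨hψ, hχ⟩
  have hind : ∀ x (b : B) g, ψ (((b : G) * g) • x) = (χ b : F) * ψ (g • x) := fun x b g => by
    rw [mul_smul, hχ]
  refine ⟨fun x => ⟨hψ.comp_continuous (continuous_id.smul continuous_const), hind x⟩,
    IsLocallyConstant.of_uncurry_of_compactSpace_rightRel B (fun b => (χ b : F))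
      (hψ.comp_continuous (continuous_snd.smul continuous_fst)) fun x => hind x,
    fun h x => funext fun g => by simp [mul_smul]⟩

theorem invOn_translates_evalOne :
    Set.InvOn (fun (ψ : X → F) (x : X) (g : G) => ψ (g • x))
      (fun (Φ : X → G → F) (x : X) => Φ x 1)
      (EquivariantMaps B χ) (ChiEquivariantMaps B χ) := by
  refine ⟨fun Φ ⟨_, _, hequiv⟩ => ?_, fun ψ _ => ?_⟩ <;> funext x
  · funext g
    simp [hequiv]
  · simp

end Induction

theorem bijOn_evaluation_at_one_general [IsTopologicalGroup G]
    (B : Subgroup G) (hcompact : CompactSpace (Quotient (QuotientGroup.rightRel B)))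
    (χ : B →* Fˣ)
    [MulAction G X] [ContinuousSMul G X] :
    Set.BijOn (fun (Φ : X → G → F) (x : X) => Φ x 1)
      (EquivariantMaps B χ) (ChiEquivariantMaps B χ) ∧
    Set.InvOn (fun (ψ : X → F) (x : X) (g : G) => ψ (g • x))
      (fun (Φ : X → G → F) (x : X) => Φ x 1)
      (EquivariantMaps B χ) (ChiEquivariantMaps B χ) := by
  have := hcompact
  exact ⟨invOn_translates_evalOne.bijOn mapsTo_evalOne mapsTo_translates,
    invOn_translates_evalOne⟩

/-- Frobenius reciprocity for smooth induction: if `B ⊆ G` is a subgroup with `B\G`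
compact, `F` a finite (discrete) field, `χ : B → F^*` a homomorphism and `X` a topological
space with a continuous left `G`-action, then `Φ ↦ (x ↦ Φ(x)(1))` is a bijection from the
continuous `G`-equivariant maps `X → Ind_B^G(χ)` onto the continuous maps `ψ : X → F` with
`ψ(b·x) = χ(b)ψ(x)`, with inverse `ψ ↦ (x ↦ (g ↦ ψ(g·x)))`. -/
theorem bijOn_evaluation_at_one [IsTopologicalGroup G] [Fintype F]
    (B : Subgroup G) (hcompact : CompactSpace (Quotient (QuotientGroup.rightRel B)))
    (χ : B →* Fˣ)
    [MulAction G X] [ContinuousSMul G X] :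
    Set.BijOn (fun (Φ : X → G → F) (x : X) => Φ x 1)
      (EquivariantMaps B χ) (ChiEquivariantMaps B χ) ∧
    Set.InvOn (fun (ψ : X → F) (x : X) (g : G) => ψ (g • x))
      (fun (Φ : X → G → F) (x : X) => Φ x 1)
      (EquivariantMaps B χ) (ChiEquivariantMaps B χ) :=
  bijOn_evaluation_at_one_general B hcompact χ
end

section
/- Let p be a prime, q a power of p, and χ₁, χ₂ : ℚ_p^* → 𝔽_q^* two group homomorphisms with χ₁ ≠ χ₂. Suppose f : GL₂(ℚ_p) → 𝔽_q is a locally constant function such that f(bg) = χ₁(b₁₁)·χ₂(b₂₂)·f(g) for every upper triangular matrix b = (b₁₁ b₁₂; 0 b₂₂) ∈ B(ℚ_p) and every g ∈ GL₂(ℚ_p), and such that f(gs) = f(g) for all g ∈ GL₂(ℚ_p) and all s ∈ SL₂(ℚ_p). Then f = 0. In other words, the space of SL₂(ℚ_p)-invariants of the parabolic induction Ind_{B(ℚ_p)}^{GL₂(ℚ_p)}(χ₁, χ₂) is zero when χ₁ ≠ χ₂. -/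
open Matrix

/-- Diagonal matrix in `GL (Fin 2)`. -/
noncomputable def myDiagGL (p : ℕ) [Fact p.Prime] (u v : ℚ_[p]ˣ) : GL (Fin 2) ℚ_[p] where
  val := Matrix.diagonal ![(u : ℚ_[p]), (v : ℚ_[p])]
  inv := Matrix.diagonal ![((u⁻¹ : ℚ_[p]ˣ) : ℚ_[p]), ((v⁻¹ : ℚ_[p]ˣ) : ℚ_[p])]
  val_inv := by
    rw [Matrix.diagonal_mul_diagonal]
    ext i j
    fin_cases i <;> fin_cases j <;>
      simp [Matrix.diagonal, Matrix.one_apply]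
  inv_val := by
    rw [Matrix.diagonal_mul_diagonal]
    ext i j
    fin_cases i <;> fin_cases j <;>
      simp [Matrix.diagonal, Matrix.one_apply]

/-- The `SL₂(ℚ_p)`-invariants of the parabolic induction
`Ind_{B(ℚ_p)}^{GL₂(ℚ_p)}(χ₁, χ₂)` vanish when `χ₁ ≠ χ₂`: a locally constant
`f : GL₂(ℚ_p) → 𝔽_q` transforming by `(χ₁, χ₂)` under left translation by upper
triangular matrices and invariant under right translation by `SL₂(ℚ_p)` is zero. -/
theorem principal_series_SL2_invariants_eq_zero
    (p : ℕ) [Fact p.Prime] (k : ℕ) (hk : 0 < k)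
    (F : Type*) [Field F] [Fintype F] (hF : Fintype.card F = p ^ k)
    (χ₁ χ₂ : ℚ_[p]ˣ →* Fˣ) (hχ : χ₁ ≠ χ₂)
    (f : GL (Fin 2) ℚ_[p] → F) (hf : IsLocallyConstant f)
    (hB : ∀ b g : GL (Fin 2) ℚ_[p],
      (b : Matrix (Fin 2) (Fin 2) ℚ_[p]) 1 0 = 0 →
      ∀ u v : ℚ_[p]ˣ,
        (u : ℚ_[p]) = (b : Matrix (Fin 2) (Fin 2) ℚ_[p]) 0 0 →
        (v : ℚ_[p]) = (b : Matrix (Fin 2) (Fin 2) ℚ_[p]) 1 1 →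
        f (b * g) = (χ₁ u : F) * (χ₂ v : F) * f g)
    (hSL : ∀ g s : GL (Fin 2) ℚ_[p],
      (s : Matrix (Fin 2) (Fin 2) ℚ_[p]).det = 1 → f (g * s) = f g) :
    f = 0 := by
  -- diagonal entries facts
  have hent : ∀ u v : ℚ_[p]ˣ,
      ((myDiagGL p u v : GL (Fin 2) ℚ_[p]) : Matrix (Fin 2) (Fin 2) ℚ_[p]) 1 0 = 0 ∧
      ((myDiagGL p u v : GL (Fin 2) ℚ_[p]) : Matrix (Fin 2) (Fin 2) ℚ_[p]) 0 0 = (u : ℚ_[p]) ∧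
      ((myDiagGL p u v : GL (Fin 2) ℚ_[p]) : Matrix (Fin 2) (Fin 2) ℚ_[p]) 1 1 = (v : ℚ_[p]) := by
    intro u v
    refine ⟨?_, ?_, ?_⟩ <;> simp [myDiagGL, Matrix.diagonal]
  have hdet : ∀ u v : ℚ_[p]ˣ,
      ((myDiagGL p u v : GL (Fin 2) ℚ_[p]) : Matrix (Fin 2) (Fin 2) ℚ_[p]).det
        = (u : ℚ_[p]) * (v : ℚ_[p]) := by
    intro u v
    simp [myDiagGL, Matrix.det_fin_two, Matrix.diagonal]
  -- value at a diagonal matrix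
  have hval : ∀ u v : ℚ_[p]ˣ, f (myDiagGL p u v) = (χ₁ u : F) * (χ₂ v : F) * f 1 := by
    intro u v
    obtain ⟨h10, h00, h11⟩ := hent u v
    have := hB (myDiagGL p u v) 1 h10 u v h00.symm h11.symm
    simpa using this
  -- f(diag(u,v)) = f(diag(uv,1)) via SL₂-invariance
  have hsl : ∀ u v : ℚ_[p]ˣ, f (myDiagGL p (u*v) 1) = f (myDiagGL p u v) := by
    intro u v
    have hmul : myDiagGL p (u*v) 1 * myDiagGL p v⁻¹ v = myDiagGL p u v := by
      ext i j
      simp only [Units.val_mul, myDiagGL, Matrix.diagonal_mul_diagonal]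
      fin_cases i <;> fin_cases j <;>
        simp [Matrix.diagonal, mul_comm, mul_assoc]
    have hd : ((myDiagGL p v⁻¹ v : GL (Fin 2) ℚ_[p]) :
        Matrix (Fin 2) (Fin 2) ℚ_[p]).det = 1 := by
      rw [hdet]; simp
    conv_rhs => rw [← hmul]
    exact (hSL _ _ hd).symm
  -- f 1 = 0
  have h1 : f 1 = 0 := by
    obtain ⟨v, hv⟩ : ∃ v, χ₁ v ≠ χ₂ v := by
      by_contra h
      push_neg at h
      exact hχ (MonoidHom.ext h)
    have e1 := hsl 1 v
    rw [hval, hval] at e1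
    simp only [mul_one, one_mul, _root_.map_one, Units.val_one] at e1
    by_contra h0
    exact hv (Units.ext (by
      have := mul_right_cancel₀ h0 e1
      simpa using this))
  -- general g
  funext g
  set d : ℚ_[p]ˣ := Matrix.GeneralLinearGroup.det g with hd
  have hs : ((((myDiagGL p d 1)⁻¹ * g : GL (Fin 2) ℚ_[p])) :
      Matrix (Fin 2) (Fin 2) ℚ_[p]).det = 1 := by
    have : (((myDiagGL p d 1)⁻¹ : GL (Fin 2) ℚ_[p]) :
        Matrix (Fin 2) (Fin 2) ℚ_[p]).det = ((d⁻¹ : ℚ_[p]ˣ) : ℚ_[p]) := by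
      show (Matrix.diagonal ![((d⁻¹ : ℚ_[p]ˣ) : ℚ_[p]), ((1⁻¹ : ℚ_[p]ˣ) : ℚ_[p])]).det = _
      simp [Matrix.det_fin_two, Matrix.diagonal]
    rw [Units.val_mul, Matrix.det_mul, this]
    have hgd : ((g : GL (Fin 2) ℚ_[p]) : Matrix (Fin 2) (Fin 2) ℚ_[p]).det = (d : ℚ_[p]) := rfl
    rw [hgd]
    simp
  have : f g = f (myDiagGL p d 1) := by
    have := hSL (myDiagGL p d 1) ((myDiagGL p d 1)⁻¹ * g) hs
    rwa [← mul_assoc, mul_inv_cancel, one_mul] at this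
  rw [this, hval]
  simp [h1]
end
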